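/- Recursion theorem for relatively precomplete numberings: if γ is an A-precomplete numbering, then every total A-computable function f: ℕ → ℕ has a fixpoint modulo γ, i.e. there is an n ∈ ℕ such that f(n) ∼_γ n. -/

import Mathlib

open Nat Part

/-- Partial functions on `ℕ` computable relative to an oracle set `A`. -/
inductive RecursiveInSet (A : Set ℕ) : (ℕ →. ℕ) → Prop
  | zero : RecursiveInSet A (pure 0)
  | succ : RecursiveInSet A ↑Nat.succ
  | left : RecursiveInSet A ↑fun n : ℕ => n.unpair.1
  | right : RecursiveInSet A ↑fun n : ℕ => n.unpair.2
  | oracle : RecursiveInSet A ↑fun n : ℕ => A.indicator 1 n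
  | pair {f g} : RecursiveInSet A f → RecursiveInSet A g →
      RecursiveInSet A fun n => Nat.pair <$> f n <*> g n
  | comp {f g} : RecursiveInSet A f → RecursiveInSet A g →
      RecursiveInSet A fun n => g n >>= f
  | prec {f g} : RecursiveInSet A f → RecursiveInSet A g →
      RecursiveInSet A (Nat.unpaired fun a n =>
        n.rec (f a) fun y IH => do let i ← IH; g (Nat.pair a (Nat.pair y i)))
  | rfind {f} : RecursiveInSet A f →
      RecursiveInSet A fun a => Nat.rfind fun n => (fun m => m = 0) <$> f (Nat.pair a n)

/-- A total function `f : ℕ → ℕ` is `A`-computable. -/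
def ComputableInSet (A : Set ℕ) (f : ℕ → ℕ) : Prop :=
  RecursiveInSet A fun n => Part.some (f n)

/-- A total binary function is `A`-computable. -/
def ComputableInSet₂ (A : Set ℕ) (h : ℕ → ℕ → ℕ) : Prop :=
  ComputableInSet A fun n => h n.unpair.1 n.unpair.2

/-- The characteristic function of a set of naturals. -/
noncomputable def chi (A : Set ℕ) : ℕ → ℕ := A.indicator 1

/-- Turing reducibility: `A ≤_T B`. -/
def TuringLE (A B : Set ℕ) : Prop := ComputableInSet B (chi A)

/-- `A` is computable. -/
def SetComputable (A : Set ℕ) : Prop := ComputableInSet ∅ (chi A)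

/-- `X` is computably enumerable in `A`: `X` is the domain of a partial
`A`-computable function. -/
def CEIn (A : Set ℕ) (X : Set ℕ) : Prop :=
  ∃ p : ℕ →. ℕ, RecursiveInSet A p ∧ X = p.Dom

/-- `A ≤_γ B` (`A` is `(γ,B)`-low): every total `A`-computable function has a
`B`-computable `γ`-lift. -/
def GammaLE (γ : ℕ → ℕ → Prop) (A B : Set ℕ) : Prop :=
  ∀ f : ℕ → ℕ, ComputableInSet A f →
    ∃ g : ℕ → ℕ, ComputableInSet B g ∧ ∀ n, γ (f n) (g n)

/-- `A` is `γ`-low: `A ≤_γ ∅`. -/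
def GammaLow (γ : ℕ → ℕ → Prop) (A : Set ℕ) : Prop := GammaLE γ A ∅

/-- `γ` is `(n, A)`-divisible (for finite `n`). -/
def DivisibleFin (γ : ℕ → ℕ → Prop) (n : ℕ) (A : Set ℕ) : Prop :=
  ∃ (x : Fin n → ℕ) (X : Fin n → Set ℕ),
    (∀ i, CEIn A (X i)) ∧
    (∀ i, {m | γ (x i) m} ⊆ X i) ∧
    (∀ i j, i ≠ j → {m | γ (x i) m} ∩ X j = ∅)

/-- `γ` is `(ω, A)`-divisible. -/
def DivisibleOmega (γ : ℕ → ℕ → Prop) (A : Set ℕ) : Prop :=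
  ∃ (x : ℕ → ℕ) (X : ℕ → Set ℕ),
    ComputableInSet A x ∧
    CEIn A {k : ℕ | k.unpair.2 ∈ X k.unpair.1} ∧
    (∀ i, {m | γ (x i) m} ⊆ X i) ∧
    (∀ i j, i ≠ j → {m | γ (x i) m} ∩ X j = ∅)

/-- `γ` is `A`-precomplete: every partial `A`-computable function has a total
`A`-computable totalization modulo `γ`. -/
def PrecompleteIn (γ : ℕ → ℕ → Prop) (A : Set ℕ) : Prop :=
  ∀ ψ : ℕ →. ℕ, RecursiveInSet A ψ →
    ∃ f : ℕ → ℕ, ComputableInSet A f ∧ ∀ n, ∀ y ∈ ψ n, γ y (f n)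

/-- `γ` is a c.e. numbering. -/
def CENumbering (γ : ℕ → ℕ → Prop) : Prop :=
  CEIn ∅ {k : ℕ | γ k.unpair.1 k.unpair.2}

/-- The `e`-th partial computable function. -/
def phi (e : ℕ) : ℕ →. ℕ := (Denumerable.ofNat Nat.Partrec.Code e).eval

/-- The `e`-th computably enumerable set. -/
def Wset (e : ℕ) : Set ℕ := (phi e).Dom

/-- The halting set `∅'`. -/
def halting : Set ℕ := {e : ℕ | (phi e e).Dom}

/-!
The classical proof of Ershov's recursion theorem, relativized to `A`. By the use principle,
every `A`-recursive `p` is the limit of a uniformly partial recursive family `q a` evaluated at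
the codes `a` of longer and longer initial segments of `χ_A`. A code of `q` for Mathlib's plain
universal machine is therefore an `A`-index of `p`, and searching over segment lengths and step
bounds gives an `A`-recursive universal function `U`. If `h` totalizes the diagonal
`x ↦ U ⟨x, x⟩` modulo `γ` and `e` is an `A`-index of `f ∘ h`, then `U ⟨e, e⟩ = f (h e)` is a value
of the diagonal at `e`, so `f (h e) ∼_γ h e`.
-/

open Filter
open Nat.Partrec (Code)

theorem Primrec.unpair_fst : Primrec fun n : ℕ => n.unpair.1 := Primrec.fst.comp Primrec.unpair

theorem Primrec.unpair_snd : Primrec fun n : ℕ => n.unpair.2 := Primrec.snd.comp Primrec.unpair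

theorem indicator_one_eq_some_chi (A : Set ℕ) (n : ℕ) :
    A.indicator (1 : ℕ → Part ℕ) n = Part.some (chi A n) := by
  by_cases hn : n ∈ A <;> simp [chi, hn] <;> rfl

namespace RecursiveInSet

variable {A : Set ℕ}

theorem of_eq {f g : ℕ →. ℕ} (hf : RecursiveInSet A f) (H : ∀ n, f n = g n) :
    RecursiveInSet A g :=
  funext H ▸ hf

theorem of_partrec {f : ℕ →. ℕ} (hf : Nat.Partrec f) : RecursiveInSet A f := by
  induction hf with
  | zero => exact .zero
  | succ => exact .succ
  | left => exact .left
  | right => exact .right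
  | pair _ _ ihf ihg => exact .pair ihf ihg
  | comp _ _ ihf ihg => exact .comp ihf ihg
  | prec _ _ ihf ihg => exact .prec ihf ihg
  | rfind _ ih => exact .rfind ih

theorem comp_computableInSet {f : ℕ →. ℕ} {g : ℕ → ℕ} (hf : RecursiveInSet A f)
    (hg : ComputableInSet A g) : RecursiveInSet A fun n => f (g n) :=
  (hf.comp hg).of_eq fun _ => Part.bind_some _ _

end RecursiveInSet

namespace ComputableInSet

variable {A : Set ℕ}

theorem of_primrec {f : ℕ → ℕ} (hf : Primrec f) : ComputableInSet A f :=
  RecursiveInSet.of_partrec (Partrec.nat_iff.1 hf.to_comp)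

theorem comp {f g : ℕ → ℕ} (hf : ComputableInSet A f) (hg : ComputableInSet A g) :
    ComputableInSet A (f ∘ g) :=
  RecursiveInSet.comp_computableInSet (f := fun n => Part.some (f n)) hf hg

theorem pair {f g : ℕ → ℕ} (hf : ComputableInSet A f) (hg : ComputableInSet A g) :
    ComputableInSet A fun n => Nat.pair (f n) (g n) :=
  (RecursiveInSet.pair hf hg).of_eq fun _ => by simp [Seq.seq]

theorem of_recurrence {u : ℕ → ℕ} {s : ℕ → ℕ → ℕ} (hs : ComputableInSet₂ A s)
    (hsucc : ∀ n, u (n + 1) = s n (u n)) : ComputableInSet A u := by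
  have hstep : ComputableInSet A fun w => s w.unpair.2.unpair.1 w.unpair.2.unpair.2 :=
    hs.comp (of_primrec Primrec.unpair_snd)
  have hrec := RecursiveInSet.prec (of_primrec (Primrec.const (u 0)) :
    ComputableInSet A fun _ => u 0) hstep
  refine (hrec.comp_computableInSet
    (of_primrec (Primrec₂.natPair.comp (Primrec.const 0) Primrec.id))).of_eq fun n => ?_
  simp only [Nat.unpaired, Nat.unpair_pair]
  induction n with
  | zero => rfl
  | succ n ih =>
    simp only [id, Part.bind_eq_bind] at ih ⊢
    rw [ih, Part.bind_some, hsucc]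

end ComputableInSet

theorem computableInSet_chi {A : Set ℕ} : ComputableInSet A (chi A) :=
  RecursiveInSet.oracle.of_eq (indicator_one_eq_some_chi A)

theorem RecursiveInSet.rfindOpt {A : Set ℕ} {F : ℕ → ℕ → Option ℕ}
    (hF : ComputableInSet₂ A fun a n => Encodable.encode (F a n)) :
    RecursiveInSet A fun a => Nat.rfindOpt (F a) := by
  have htest : ComputableInSet A fun w => cond (F w.unpair.1 w.unpair.2).isSome 0 1 :=
    ((ComputableInSet.of_primrec (Primrec.cond
      (Primrec.option_isSome.comp (Primrec.ofNat (Option ℕ))) (Primrec.const 0)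
      (Primrec.const 1))).comp hF).of_eq fun _ => by simp
  have hdecode : Nat.Partrec fun v => Part.ofOption (Denumerable.ofNat (Option ℕ) v) :=
    Partrec.nat_iff.1 (Computable.ofOption (Computable.ofNat _))
  have hout : RecursiveInSet A fun w => Part.ofOption (F w.unpair.1 w.unpair.2) :=
    ((of_partrec hdecode).comp_computableInSet hF).of_eq fun _ => by simp
  refine (hout.comp (RecursiveInSet.pair (f := fun a => Part.some a)
    (ComputableInSet.of_primrec Primrec.id) htest.rfind)).of_eq fun a => ?_
  have htest_eq (n : ℕ) : decide (cond (F a n).isSome 0 1 = 0) = (F a n).isSome := by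
    cases (F a n).isSome <;> rfl
  simp [Nat.rfindOpt, Seq.seq, htest_eq]

-- The `prec` and `rfind` schemes of `Nat.Partrec` and `RecursiveInSet`, in exactly their shape.
def natPrec (f g : ℕ →. ℕ) : ℕ →. ℕ :=
  Nat.unpaired fun a n =>
    n.rec (f a) fun y IH => do let i ← IH; g (Nat.pair a (Nat.pair y i))

def natRfind (f : ℕ →. ℕ) : ℕ →. ℕ :=
  fun a => Nat.rfind fun n => (fun m => m = 0) <$> f (Nat.pair a n)

structure Approximates (q : ℕ → ℕ →. ℕ) (p : ℕ →. ℕ) : Prop where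
  mem_of_mem {k x m : ℕ} : m ∈ q k x → m ∈ p x
  eventually_mem {x m : ℕ} : m ∈ p x → ∀ᶠ k in atTop, m ∈ q k x

namespace Approximates

variable {f g : ℕ →. ℕ} {qf qg : ℕ → ℕ →. ℕ}

theorem const (f : ℕ →. ℕ) : Approximates (fun _ => f) f :=
  ⟨id, fun h => .of_forall fun _ => h⟩

theorem pair (hf : Approximates qf f) (hg : Approximates qg g) :
    Approximates (fun k n => Nat.pair <$> qf k n <*> qg k n)
      (fun n => Nat.pair <$> f n <*> g n) := by
  have mem_iff (a b : Part ℕ) (m : ℕ) :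
      m ∈ (Nat.pair <$> a <*> b) ↔ ∃ u ∈ a, ∃ v ∈ b, Nat.pair u v = m := by
    simp [Seq.seq]
  constructor
  · intro k x m h
    obtain ⟨u, hu, v, hv, rfl⟩ := (mem_iff _ _ _).1 h
    exact (mem_iff _ _ _).2 ⟨u, hf.mem_of_mem hu, v, hg.mem_of_mem hv, rfl⟩
  · intro x m h
    obtain ⟨u, hu, v, hv, rfl⟩ := (mem_iff _ _ _).1 h
    filter_upwards [hf.eventually_mem hu, hg.eventually_mem hv] with k hu' hv'
    exact (mem_iff _ _ _).2 ⟨u, hu', v, hv', rfl⟩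

theorem comp (hf : Approximates qf f) (hg : Approximates qg g) :
    Approximates (fun k n => qg k n >>= qf k) (fun n => g n >>= f) := by
  constructor
  · intro k x m h
    obtain ⟨i, hi, hm⟩ := Part.mem_bind_iff.1 h
    exact Part.mem_bind_iff.2 ⟨i, hg.mem_of_mem hi, hf.mem_of_mem hm⟩
  · intro x m h
    obtain ⟨i, hi, hm⟩ := Part.mem_bind_iff.1 h
    filter_upwards [hg.eventually_mem hi, hf.eventually_mem hm] with k hi' hm'
    exact Part.mem_bind_iff.2 ⟨i, hi', hm'⟩

theorem natPrec (hf : Approximates qf f) (hg : Approximates qg g) :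
    Approximates (fun k => natPrec (qf k) (qg k)) (natPrec f g) := by
  constructor
  · intro k z
    simp only [_root_.natPrec, Nat.unpaired]
    induction z.unpair.2 with
    | zero => exact fun h => hf.mem_of_mem h
    | succ n ih =>
      intro m h
      obtain ⟨i, hi, hm⟩ := Part.mem_bind_iff.1 h
      exact Part.mem_bind_iff.2 ⟨i, ih hi, hg.mem_of_mem hm⟩
  · intro z
    simp only [_root_.natPrec, Nat.unpaired]
    induction z.unpair.2 with
    | zero => exact fun h => hf.eventually_mem h
    | succ n ih =>
      intro m h
      obtain ⟨i, hi, hm⟩ := Part.mem_bind_iff.1 h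
      filter_upwards [ih hi, hg.eventually_mem hm] with k hi' hm'
      exact Part.mem_bind_iff.2 ⟨i, hi', hm'⟩

theorem natRfind (hf : Approximates qf f) :
    Approximates (fun k => natRfind (qf k)) (natRfind f) := by
  have mem_map_iff (a : Part ℕ) (b : Bool) :
      b ∈ (fun m => decide (m = 0)) <$> a ↔ ∃ v ∈ a, decide (v = 0) = b :=
    Part.mem_map_iff _
  constructor
  · intro k a m h
    obtain ⟨htrue, hlt⟩ := Nat.mem_rfind.1 h
    refine Nat.mem_rfind.2 ⟨?_, fun hj => ?_⟩
    · obtain ⟨v, hv, ev⟩ := (mem_map_iff _ _).1 htrue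
      exact (mem_map_iff _ _).2 ⟨v, hf.mem_of_mem hv, ev⟩
    · obtain ⟨v, hv, ev⟩ := (mem_map_iff _ _).1 (hlt hj)
      exact (mem_map_iff _ _).2 ⟨v, hf.mem_of_mem hv, ev⟩
  · intro a m h
    obtain ⟨htrue, hlt⟩ := Nat.mem_rfind.1 h
    have eventually_map {j : ℕ} {b : Bool}
        (hb : b ∈ (fun m => decide (m = 0)) <$> f (Nat.pair a j)) :
        ∀ᶠ k in atTop, b ∈ (fun m => decide (m = 0)) <$> qf k (Nat.pair a j) := by
      obtain ⟨v, hv, ev⟩ := (mem_map_iff _ _).1 hb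
      filter_upwards [hf.eventually_mem hv] with k hv'
      exact (mem_map_iff _ _).2 ⟨v, hv', ev⟩
    have hlt' := (Set.finite_Iio m).eventually_all.2 fun j hj => eventually_map (hlt hj)
    filter_upwards [eventually_map htrue, hlt'] with k htrue' hlt''
    exact Nat.mem_rfind.2 ⟨htrue', fun hj => hlt'' _ hj⟩

end Approximates

noncomputable def oracleApprox (A : Set ℕ) (k : ℕ) : ℕ :=
  Encodable.encode ((List.range k).map (chi A))

theorem oracleApprox_succ (A : Set ℕ) (k : ℕ) :
    oracleApprox A (k + 1) =
      Encodable.encode (Denumerable.ofNat (List ℕ) (oracleApprox A k) ++ [chi A k]) := by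
  simp [oracleApprox, List.range_succ]

theorem computableInSet_oracleApprox {A : Set ℕ} : ComputableInSet A (oracleApprox A) := by
  have hstep : Primrec fun v : ℕ =>
      Encodable.encode (Denumerable.ofNat (List ℕ) v.unpair.1.unpair.2 ++ [v.unpair.2]) :=
    Primrec.encode.comp (Primrec.list_append.comp
      ((Primrec.ofNat (List ℕ)).comp
        (Primrec.unpair_snd.comp Primrec.unpair_fst))
      (Primrec.list_cons.comp Primrec.unpair_snd (Primrec.const [])))
  refine .of_recurrence
    (s := fun k a => Encodable.encode (Denumerable.ofNat (List ℕ) a ++ [chi A k])) ?_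
    (oracleApprox_succ A)
  exact ((ComputableInSet.of_primrec hstep).comp ((ComputableInSet.of_primrec Primrec.id).pair
    (computableInSet_chi.comp (.of_primrec Primrec.unpair_fst)))).of_eq
    fun _ => by simp

theorem approximates_oracle (A : Set ℕ) :
    Approximates (fun k x => Part.ofOption (Denumerable.ofNat (List ℕ) (oracleApprox A k))[x]?)
      fun n => Part.some (chi A n) := by
  have mem_iff (k x m : ℕ) :
      m ∈ Part.ofOption (Denumerable.ofNat (List ℕ) (oracleApprox A k))[x]? ↔
        x < k ∧ chi A x = m := by
    simp [oracleApprox, List.getElem?_eq_some_iff]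
  constructor
  · intro k x m h
    exact Part.mem_some_iff.2 ((mem_iff k x m).1 h).2.symm
  · intro x m h
    filter_upwards [eventually_gt_atTop x] with k hk
    exact (mem_iff k x m).2 ⟨hk, (Part.mem_some_iff.1 h).symm⟩

def UniformlyPartrec (q : ℕ → ℕ →. ℕ) : Prop :=
  Nat.Partrec (Nat.unpaired q)

namespace UniformlyPartrec

variable {f : ℕ →. ℕ} {qf qg : ℕ → ℕ →. ℕ}

theorem const (hf : Nat.Partrec f) : UniformlyPartrec fun _ => f :=
  (hf.comp Nat.Partrec.right).of_eq fun _ => Part.bind_some _ _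

theorem pair (hf : UniformlyPartrec qf) (hg : UniformlyPartrec qg) :
    UniformlyPartrec fun a n => Nat.pair <$> qf a n <*> qg a n :=
  Nat.Partrec.pair hf hg

theorem comp (hf : UniformlyPartrec qf) (hg : UniformlyPartrec qg) :
    UniformlyPartrec fun a n => qg a n >>= qf a :=
  (Nat.Partrec.comp hf (Nat.Partrec.left.pair hg)).of_eq fun _ => by
    simp only [Seq.seq, PFun.coe_val, Part.map_eq_map, Part.map_some, Nat.unpaired,
      Part.bind_some, Part.bind_eq_bind, Part.bind_map, Nat.unpair_pair]
    rfl

open Primrec in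
theorem reassoc (hf : UniformlyPartrec qf) :
    Nat.Partrec fun w => qf w.unpair.1.unpair.1 (Nat.pair w.unpair.1.unpair.2 w.unpair.2) :=
  (Partrec.nat_iff.1 ((Partrec.nat_iff.2 hf).comp (Primrec₂.natPair.comp
    (unpair_fst.comp unpair_fst) (Primrec₂.natPair.comp (unpair_snd.comp unpair_fst)
      unpair_snd)).to_comp)).of_eq fun _ => by simp [Nat.unpaired]

open Primrec in
theorem natPrec (hf : UniformlyPartrec qf) (hg : UniformlyPartrec qg) :
    UniformlyPartrec fun a => natPrec (qf a) (qg a) :=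
  (Partrec.nat_iff.1 ((Partrec.nat_iff.2 (Nat.Partrec.prec hf hg.reassoc)).comp
    (Primrec₂.natPair.comp (Primrec₂.natPair.comp unpair_fst (unpair_fst.comp unpair_snd))
      (unpair_snd.comp unpair_snd)).to_comp)).of_eq fun _ => by
    simp [_root_.natPrec, Nat.unpaired]

theorem natRfind (hf : UniformlyPartrec qf) :
    UniformlyPartrec fun a => natRfind (qf a) :=
  (Nat.Partrec.rfind hf.reassoc).of_eq fun _ => by simp [_root_.natRfind, Nat.unpaired]

theorem getElem? :
    UniformlyPartrec fun a x => Part.ofOption (Denumerable.ofNat (List ℕ) a)[x]? :=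
  Partrec.nat_iff.1 (Computable.ofOption (Computable.list_getElem?.comp
    ((Computable.ofNat (List ℕ)).comp Primrec.unpair_fst.to_comp) Primrec.unpair_snd.to_comp))

end UniformlyPartrec

theorem RecursiveInSet.exists_uniformlyPartrec_approximates {A : Set ℕ} {p : ℕ →. ℕ}
    (hp : RecursiveInSet A p) :
    ∃ q, UniformlyPartrec q ∧ Approximates (fun k => q (oracleApprox A k)) p := by
  induction hp with
  | zero => exact ⟨_, .const .zero, .const _⟩
  | succ => exact ⟨_, .const .succ, .const _⟩
  | left => exact ⟨_, .const .left, .const _⟩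
  | right => exact ⟨_, .const .right, .const _⟩
  | oracle =>
    refine ⟨_, .getElem?, ?_⟩
    simpa only [indicator_one_eq_some_chi] using approximates_oracle A
  | pair _ _ ihf ihg =>
    obtain ⟨qf, hqf, hf⟩ := ihf
    obtain ⟨qg, hqg, hg⟩ := ihg
    exact ⟨_, hqf.pair hqg, hf.pair hg⟩
  | comp _ _ ihf ihg =>
    obtain ⟨qf, hqf, hf⟩ := ihf
    obtain ⟨qg, hqg, hg⟩ := ihg
    exact ⟨_, hqf.comp hqg, hf.comp hg⟩
  | prec _ _ ihf ihg =>
    obtain ⟨qf, hqf, hf⟩ := ihf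
    obtain ⟨qg, hqg, hg⟩ := ihg
    exact ⟨_, hqf.natPrec hqg, hf.natPrec hg⟩
  | rfind _ ihf =>
    obtain ⟨qf, hqf, hf⟩ := ihf
    exact ⟨_, hqf.natRfind, hf.natRfind⟩

/-- On input `⟨e, x⟩`, search for `⟨k, s⟩` such that the plain code `e`, run for `s` steps on
`⟨oracleApprox A k, x⟩`, halts. -/
noncomputable def oracleUniversal (A : Set ℕ) (z : ℕ) : Part ℕ :=
  Nat.rfindOpt fun K => Code.evaln K.unpair.2 (Denumerable.ofNat Code z.unpair.1)
    (Nat.pair (oracleApprox A K.unpair.1) z.unpair.2)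

open Primrec in
theorem recursiveInSet_oracleUniversal (A : Set ℕ) : RecursiveInSet A (oracleUniversal A) := by
  have heval : Primrec fun v : ℕ => Encodable.encode (Code.evaln v.unpair.1.unpair.2.unpair.2
      (Denumerable.ofNat Code v.unpair.1.unpair.1.unpair.1)
      (Nat.pair v.unpair.2 v.unpair.1.unpair.1.unpair.2)) :=
    Primrec.encode.comp (Code.primrec_evaln.comp
      (((unpair_snd.comp (unpair_snd.comp unpair_fst)).pair
        ((Primrec.ofNat Code).comp (unpair_fst.comp (unpair_fst.comp unpair_fst)))).pair
        (Primrec₂.natPair.comp unpair_snd (unpair_snd.comp (unpair_fst.comp unpair_fst)))))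
  exact RecursiveInSet.rfindOpt (((ComputableInSet.of_primrec heval).comp
    ((ComputableInSet.of_primrec Primrec.id).pair (computableInSet_oracleApprox.comp
      (ComputableInSet.of_primrec (unpair_fst.comp unpair_snd))))).of_eq fun _ => by simp)

theorem RecursiveInSet.exists_oracleUniversal_eq {A : Set ℕ} {p : ℕ →. ℕ}
    (hp : RecursiveInSet A p) : ∃ e, ∀ x, oracleUniversal A (Nat.pair e x) = p x := by
  obtain ⟨q, hq, happrox⟩ := hp.exists_uniformlyPartrec_approximates
  obtain ⟨c, hc⟩ := Code.exists_code.1 hq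
  refine ⟨Encodable.encode c, fun x => ?_⟩
  have sound {m : ℕ} (hm : m ∈ oracleUniversal A (Nat.pair (Encodable.encode c) x)) :
      m ∈ p x := by
    obtain ⟨K, hK⟩ := Nat.rfindOpt_spec hm
    simp only [Nat.unpair_pair, Denumerable.ofNat_encode] at hK
    have hmq := Code.evaln_sound hK
    rw [hc] at hmq
    exact happrox.mem_of_mem (by simpa [Nat.unpaired] using hmq)
  refine Part.ext fun m => ⟨sound, fun hm => ?_⟩
  obtain ⟨k, hk⟩ := (happrox.eventually_mem hm).exists
  have hkc : m ∈ Code.eval c (Nat.pair (oracleApprox A k) x) := by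
    rw [hc]
    simpa [Nat.unpaired] using hk
  obtain ⟨s, hs⟩ := Code.evaln_complete.1 hkc
  have hdom : (oracleUniversal A (Nat.pair (Encodable.encode c) x)).Dom :=
    Nat.rfindOpt_dom.2 ⟨Nat.pair k s, m, by simpa using hs⟩
  obtain ⟨m', hm'⟩ := Part.dom_iff_mem.1 hdom
  rwa [Part.mem_unique (sound hm') hm] at hm'

theorem recursion_theorem_precompleteIn_general (γ : ℕ → ℕ → Prop)
    (A : Set ℕ) (hpre : PrecompleteIn γ A)
    (f : ℕ → ℕ) (hf : ComputableInSet A f) : ∃ n : ℕ, γ (f n) n := by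
  have hdiag : RecursiveInSet A fun x => oracleUniversal A (Nat.pair x x) :=
    (recursiveInSet_oracleUniversal A).comp_computableInSet
      (.of_primrec (Primrec₂.natPair.comp Primrec.id Primrec.id))
  obtain ⟨h, hh, hdiag_h⟩ := hpre _ hdiag
  obtain ⟨e, he⟩ := RecursiveInSet.exists_oracleUniversal_eq (hf.comp hh)
  exact ⟨h e, hdiag_h e (f (h e)) (by simp [he])⟩

/-- Recursion theorem for relatively precomplete numberings:
if `γ` is `A`-precomplete then every total `A`-computable function has a
fixpoint modulo `γ`. -/
theorem recursion_theorem_precompleteIn (γ : ℕ → ℕ → Prop) (hγ : Equivalence γ)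
    (A : Set ℕ) (hpre : PrecompleteIn γ A)
    (f : ℕ → ℕ) (hf : ComputableInSet A f) : ∃ n : ℕ, γ (f n) n :=
  recursion_theorem_precompleteIn_general γ A hpre f hf
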